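/- arXiv:1707.04695 — 6 statements merged into one kernel-verified Lean document; each statement's English description precedes it below -/
import Mathlib

section
/- Let (N_k) be a sequence of complex numbers satisfying N_k = 2 N_{k-1} + C_k N_{k-2} for k ≥ 1 with N_{-1} = 1, N_{-2} = 0, where |C_k| < 1 for all k. Then |N_k| - |N_{k-1}| ≥ 1 for all k ≥ 0; in particular N_k ≠ 0 for all k ≥ 0. -/
/-!
Rewriting the recurrence as `2 N_{k-1} = N_k - C_k N_{k-2}` and using `‖C_k‖ ≤ 1` gives
`‖N_{k-1}‖ - ‖N_{k-2}‖ ≤ ‖N_k‖ - ‖N_{k-1}‖`: the increments of `‖N_k‖` never decrease, and the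
first one, `‖N_0‖ - ‖N_{-1}‖ = ‖2‖ - ‖1‖`, equals `1`.
-/

theorem norm_sub_norm_le_of_eq_two_mul_add {𝕜 : Type*} [RCLike 𝕜] {c x y z : 𝕜}
    (hc : ‖c‖ ≤ 1) (h : z = 2 * y + c * x) : ‖y‖ - ‖x‖ ≤ ‖z‖ - ‖y‖ := by
  have hcx : ‖c * x‖ ≤ ‖x‖ := by
    rw [norm_mul]
    exact mul_le_of_le_one_left (norm_nonneg x) hc
  have h2y : 2 * ‖y‖ ≤ ‖z‖ + ‖c * x‖ :=
    calc 2 * ‖y‖ = ‖z - c * x‖ := by rw [h, add_sub_cancel_right, norm_mul, RCLike.norm_two]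
      _ ≤ ‖z‖ + ‖c * x‖ := norm_sub_le z (c * x)
  linarith

theorem monotone_norm_sub_norm_of_eq_two_mul_add {𝕜 : Type*} [RCLike 𝕜] {C N : ℕ → 𝕜}
    (hC : ∀ k, ‖C k‖ ≤ 1) (hN : ∀ k, N (k + 2) = 2 * N (k + 1) + C k * N k) :
    Monotone fun k => ‖N (k + 1)‖ - ‖N k‖ :=
  monotone_nat_of_le_succ fun k => norm_sub_norm_le_of_eq_two_mul_add (hC k) (hN k)

-- Indices are shifted by 2: `N 0`, `N 1`, `N (k + 2)` stand for `N_{-2}`, `N_{-1}`, `N_k`.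
/-- Denominators of the equivalent continued fraction: if `N k = 2 N (k-1) + C k * N (k-2)`
with `N (-1) = 1`, `N (-2) = 0` and `|C k| < 1`, then `|N k| - |N (k-1)| ≥ 1` for `k ≥ 0`,
and in particular `N k ≠ 0` for `k ≥ 0`.  (Indices are shifted by 2: `N 0` stands for
`N_{-2}`, `N 1` for `N_{-1}`, and `N (k+2)` for `N_k`.) -/
theorem stmt_1 (C : ℕ → ℂ) (hC : ∀ k, ‖C k‖ < 1) (N : ℕ → ℂ)
    (hN0 : N 0 = 0) (hN1 : N 1 = 1)
    (hNrec : ∀ k, N (k + 2) = 2 * N (k + 1) + C k * N k) :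
    (∀ k, 1 ≤ ‖N (k + 2)‖ - ‖N (k + 1)‖) ∧
      (∀ k, N (k + 2) ≠ 0) := by
  have hmono := monotone_norm_sub_norm_of_eq_two_mul_add (fun k => (hC k).le) hNrec
  have hbase : ‖N 2‖ - ‖N 1‖ = 1 := by
    rw [hNrec 0, hN0, hN1]
    norm_num
  have hincr (k : ℕ) : 1 ≤ ‖N (k + 2)‖ - ‖N (k + 1)‖ := hbase ▸ hmono (Nat.le_add_left 1 k)
  refine ⟨hincr, fun k hk => ?_⟩
  have := hincr k
  rw [hk, norm_zero] at this
  linarith [norm_nonneg (N (k + 1))]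
end

section
/- Let (N_k) satisfy N_k = 2 N_{k-1} + C_k N_{k-2} with N_{-1} = 1, N_{-2} = 0 and |C_i| < 1 for all i. Then the series ∑_{i=0}^{∞} (∏_{j=0}^{i} C_j)/(N_i N_{i-1}) converges absolutely. -/
/-!
By the reverse triangle inequality and `‖C k‖ ≤ 1`, the recurrence gives
`‖N (k + 2)‖ ≥ 2 ‖N (k + 1)‖ - ‖N k‖`, so the gaps `‖N (k + 1)‖ - ‖N k‖` never decrease.
The first gap is `1`, hence `‖N k‖ ≥ k`; the numerators have norm at most `1`, so the
`i`-th term is bounded by `1 / (i + 1) ^ 2`.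
-/

section ContinuedFractionDenominators

variable {𝕜 : Type*} [RCLike 𝕜] {C N : ℕ → 𝕜}

theorem monotone_norm_succ_sub_norm (hC : ∀ k, ‖C k‖ ≤ 1)
    (hNrec : ∀ k, N (k + 2) = 2 * N (k + 1) + C k * N k) :
    Monotone fun k => ‖N (k + 1)‖ - ‖N k‖ := by
  refine monotone_nat_of_le_succ fun k => ?_
  have hstep : 2 * ‖N (k + 1)‖ - ‖C k * N k‖ ≤ ‖N (k + 2)‖ := by
    simpa [hNrec k, norm_mul] using norm_sub_norm_le (2 * N (k + 1)) (-(C k * N k))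
  have hCN : ‖C k * N k‖ ≤ ‖N k‖ := by
    rw [norm_mul]
    exact mul_le_of_le_one_left (norm_nonneg _) (hC k)
  linarith

theorem natCast_le_norm_of_recurrence (hC : ∀ k, ‖C k‖ ≤ 1)
    (hNrec : ∀ k, N (k + 2) = 2 * N (k + 1) + C k * N k) (hN0 : N 0 = 0) (hN1 : N 1 = 1)
    (k : ℕ) : (k : ℝ) ≤ ‖N k‖ := by
  induction k with
  | zero => simp
  | succ k ih =>
    have hgap := monotone_norm_succ_sub_norm hC hNrec (Nat.zero_le k)
    simp only [zero_add, hN0, hN1, norm_zero, norm_one] at hgap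
    push_cast
    linarith

end ContinuedFractionDenominators

theorem summable_one_div_add_one_sq : Summable fun i : ℕ => 1 / ((i : ℝ) + 1) ^ 2 := by
  simpa using (summable_nat_add_iff 1).2 (Real.summable_one_div_nat_pow.2 one_lt_two)

/-- Absolute convergence of the Euler series of the continued fraction with
denominators `N k = 2 N (k-1) + C k N (k-2)`, `N (-1) = 1`, `N (-2) = 0`, `|C i| < 1`.
(Indices shifted by 2: `N (i+2)` stands for `N_i`.) -/
theorem stmt_3 (C : ℕ → ℂ) (hC : ∀ k, ‖C k‖ < 1) (N : ℕ → ℂ)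
    (hN0 : N 0 = 0) (hN1 : N 1 = 1)
    (hNrec : ∀ k, N (k + 2) = 2 * N (k + 1) + C k * N k) :
    Summable (fun i : ℕ =>
      ‖(∏ j ∈ Finset.range (i + 1), C j) / (N (i + 2) * N (i + 1))‖) := by
  have hC' : ∀ k, ‖C k‖ ≤ 1 := fun k => (hC k).le
  refine summable_one_div_add_one_sq.of_nonneg_of_le (fun i => norm_nonneg _) fun i => ?_
  have hprod : ‖∏ j ∈ Finset.range (i + 1), C j‖ ≤ 1 := by
    rw [norm_prod]
    exact Finset.prod_le_one (fun j _ => norm_nonneg _) fun j _ => hC' j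
  have h1 := natCast_le_norm_of_recurrence hC' hNrec hN0 hN1 (i + 1)
  have h2 := natCast_le_norm_of_recurrence hC' hNrec hN0 hN1 (i + 2)
  push_cast at h1 h2
  rw [norm_div, norm_mul, sq]
  exact div_le_div₀ zero_le_one hprod (by positivity) (mul_le_mul (by linarith) h1
    (by positivity) (norm_nonneg _))
end

section
/- With P_n the first-kind orthogonal polynomials of a Jacobi matrix (conventions: b_{-1} = 0, P_{-1} ≡ 0), for every n ≥ 0 and every real x: P_n(x)² - (b_{n-1}/b_n) P_{n-1}(x) P_{n+1}(x) = (1/b_n²) ∑_{k=0}^{n} [ (b_k² - b_{k-1}²) P_k(x)² + b_{k-1}(a_k - a_{k-1}) P_{k-1}(x) P_k(x) ]. -/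
/-!
Clearing denominators, `D n := b n ^ 2 * P n ^ 2 - b (n-1) * b n * P (n-1) * P (n+1)` is `b n ^ 2`
times the left-hand side. Eliminating `x` between the recurrence at `n` and at `n + 1` shows that
`D (n+1) - D n` is the `(n+1)`-st summand on the right, and `b (-1) = 0` makes `D 0` the `0`-th
summand, so the identity is a telescoping sum.
-/

open Finset

section

variable {a b p : ℤ → ℝ} {x : ℝ}

def JacobiRecurrenceAt (a b : ℤ → ℝ) (x : ℝ) (p : ℤ → ℝ) (n : ℤ) : Prop :=
  b (n - 1) * p (n - 1) + a n * p n + b n * p (n + 1) = x * p n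

def turanDet (b p : ℤ → ℝ) (n : ℤ) : ℝ :=
  b n ^ 2 * p n ^ 2 - b (n - 1) * b n * p (n - 1) * p (n + 1)

def turanIncrement (a b p : ℤ → ℝ) (k : ℤ) : ℝ :=
  (b k ^ 2 - b (k - 1) ^ 2) * p k ^ 2 + b (k - 1) * (a k - a (k - 1)) * p (k - 1) * p k

theorem turanDet_succ_sub_turanDet {n : ℤ} (h₀ : JacobiRecurrenceAt a b x p n)
    (h₁ : JacobiRecurrenceAt a b x p (n + 1)) :
    turanDet b p (n + 1) - turanDet b p n = turanIncrement a b p (n + 1) := by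
  unfold JacobiRecurrenceAt at h₀ h₁
  unfold turanDet turanIncrement
  rw [add_sub_cancel_right] at h₁ ⊢
  linear_combination b n * p (n + 1) * h₀ - b n * p n * h₁

theorem turanDet_eq_sum_turanIncrement (hb : b (-1) = 0)
    (hrec : ∀ n : ℕ, JacobiRecurrenceAt a b x p n) (n : ℕ) :
    turanDet b p n = ∑ k ∈ range (n + 1), turanIncrement a b p k := by
  induction n with
  | zero => simp [turanDet, turanIncrement, hb]
  | succ n ih =>
    have hstep := turanDet_succ_sub_turanDet (hrec n) (by exact_mod_cast hrec (n + 1))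
    rw [sum_range_succ, ← ih, Nat.cast_succ, ← hstep, add_sub_cancel]

end

theorem stmt_8_general (a b : ℤ → ℝ) (P : ℤ → ℝ → ℝ)
    (hbneg : b (-1) = 0)
    (hb : ∀ n : ℕ, 0 < b n)
    (hPrec : ∀ n : ℕ, ∀ x, b ((n : ℤ) - 1) * P ((n : ℤ) - 1) x + a n * P n x
      + b n * P ((n : ℤ) + 1) x = x * P n x) :
    ∀ n : ℕ, ∀ x : ℝ,
      P n x ^ 2 - (b ((n : ℤ) - 1) / b n) * P ((n : ℤ) - 1) x * P ((n : ℤ) + 1) x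
        = (1 / b n ^ 2) * ∑ k ∈ Finset.range (n + 1),
            ((b k ^ 2 - b ((k : ℤ) - 1) ^ 2) * P k x ^ 2
              + b ((k : ℤ) - 1) * (a k - a ((k : ℤ) - 1)) * P ((k : ℤ) - 1) x * P k x) := by
  intro n x
  have htel := turanDet_eq_sum_turanIncrement (a := a) (p := (P · x)) hbneg (fun m => hPrec m x) n
  simp only [turanDet, turanIncrement] at htel
  rw [← htel]
  field_simp [(hb n).ne']

/-- Turán determinant identity: with conventions `b (-1) = 0`, `P (-1) = 0`,
`P n x ^ 2 - (b (n-1)/b n) * P (n-1) x * P (n+1) x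
  = (1/b n ^ 2) * ∑_{k=0}^{n} [(b k ^ 2 - b (k-1) ^ 2) P k ^ 2
      + b (k-1) (a k - a (k-1)) P (k-1) P k]`. -/
theorem stmt_8 (a b : ℤ → ℝ) (P : ℤ → ℝ → ℝ)
    (hbneg : b (-1) = 0) (hPneg : ∀ x, P (-1) x = 0)
    (hb : ∀ n : ℕ, 0 < b n)
    (hP0 : ∀ x, P 0 x = 1) (hP1 : ∀ x, P 1 x = (x - a 0) / b 0)
    (hPrec : ∀ n : ℕ, ∀ x, b ((n : ℤ) - 1) * P ((n : ℤ) - 1) x + a n * P n x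
      + b n * P ((n : ℤ) + 1) x = x * P n x) :
    ∀ n : ℕ, ∀ x : ℝ,
      P n x ^ 2 - (b ((n : ℤ) - 1) / b n) * P ((n : ℤ) - 1) x * P ((n : ℤ) + 1) x
        = (1 / b n ^ 2) * ∑ k ∈ Finset.range (n + 1),
            ((b k ^ 2 - b ((k : ℤ) - 1) ^ 2) * P k x ^ 2
              + b ((k : ℤ) - 1) * (a k - a ((k : ℤ) - 1)) * P ((k : ℤ) - 1) x * P k x) :=
  stmt_8_general a b P hbneg hb hPrec
end

section
/- Let a_n = 0 and suppose b_{2k-1} = b_{2k} for all k ≥ 1, with b_n → ∞ such that ∑_k 1/b_{2k-1}² < ∞. Then ∑_{n=0}^{∞} P_n(0)² < ∞. -/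
/-! At `x = 0` the recurrence reads `b n P_n + b (n+1) P_{n+2} = 0`. It kills the odd values
since `P_1(0) = 0`, and, because `b (2k+1) = b (2k+2)`, it makes `b (2k+1) P_{2k+2}(0)` alternate
in sign with constant absolute value `b 0`. Hence `P_{2k+2}(0)² = b 0² / b (2k+1)²`. -/

section ZeroDiagonal

variable {R : Type*} [CommRing R] {b p : ℕ → R}

theorem odd_eq_zero_of_recurrence [NoZeroDivisors R] (hb : ∀ n, b n ≠ 0)
    (hrec : ∀ n, b n * p n + b (n + 1) * p (n + 2) = 0) (h1 : p 1 = 0) (k : ℕ) :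
    p (2 * k + 1) = 0 := by
  induction k with
  | zero => exact h1
  | succ k ih =>
    have h := hrec (2 * k + 1)
    rw [ih, mul_zero, zero_add] at h
    exact (mul_eq_zero.mp h).resolve_left (hb _)

theorem sq_mul_even_eq_of_recurrence (heq : ∀ k, b (2 * k + 1) = b (2 * k + 2))
    (hrec : ∀ n, b n * p n + b (n + 1) * p (n + 2) = 0) (k : ℕ) :
    (b (2 * k + 1) * p (2 * k + 2)) ^ 2 = (b 0 * p 0) ^ 2 := by
  induction k with
  | zero => rw [eq_neg_of_add_eq_zero_right (hrec 0), neg_sq]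
  | succ k ih =>
    have h := hrec (2 * k + 2)
    rw [← heq k] at h
    rw [← ih, show 2 * (k + 1) + 1 = 2 * k + 2 + 1 by ring,
      show 2 * (k + 1) + 2 = 2 * k + 2 + 2 by ring, eq_neg_of_add_eq_zero_right h, neg_sq]

end ZeroDiagonal

theorem summable_sq_of_recurrence {b p : ℕ → ℝ} (hb : ∀ n, b n ≠ 0)
    (heq : ∀ k, b (2 * k + 1) = b (2 * k + 2))
    (hsum : Summable (fun k : ℕ => 1 / (b (2 * k + 1)) ^ 2))
    (hrec : ∀ n, b n * p n + b (n + 1) * p (n + 2) = 0) (h1 : p 1 = 0) :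
    Summable (fun n => p n ^ 2) := by
  refine Summable.even_add_odd ?_ ?_
  · rw [← summable_nat_add_iff 1]
    refine (hsum.mul_left ((b 0 * p 0) ^ 2)).congr fun k => ?_
    rw [← sq_mul_even_eq_of_recurrence heq hrec k, mul_pow, show 2 * (k + 1) = 2 * k + 2 by ring]
    field_simp [hb]
  · simp [odd_eq_zero_of_recurrence hb hrec h1]

theorem stmt_12_general (b : ℕ → ℝ) (hb : ∀ n, 0 < b n)
    (heq : ∀ k : ℕ, b (2 * k + 1) = b (2 * k + 2))
    (hsum : Summable (fun k : ℕ => 1 / (b (2 * k + 1)) ^ 2))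
    (P : ℕ → ℝ → ℝ)
    (hP1 : ∀ x, P 1 x = x / b 0)
    (hPrec : ∀ n x, b n * P n x + b (n + 1) * P (n + 2) x = x * P (n + 1) x) :
    Summable (fun n : ℕ => (P n 0) ^ 2) := by
  refine summable_sq_of_recurrence (fun n => (hb n).ne') heq hsum (fun n => ?_) ?_
  · simpa using hPrec n 0
  · simpa using hP1 0

/-- Zero diagonal, `b (2k-1) = b (2k)` and `∑ 1/b (2k-1)² < ∞` imply
`∑ P n (0)² < ∞` (so `0` is an eigenvalue). -/
theorem stmt_12 (b : ℕ → ℝ) (hb : ∀ n, 0 < b n)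
    (heq : ∀ k : ℕ, b (2 * k + 1) = b (2 * k + 2))
    (hinf : Filter.Tendsto b Filter.atTop Filter.atTop)
    (hsum : Summable (fun k : ℕ => 1 / (b (2 * k + 1)) ^ 2))
    (P : ℕ → ℝ → ℝ)
    (hP0 : ∀ x, P 0 x = 1) (hP1 : ∀ x, P 1 x = x / b 0)
    (hPrec : ∀ n x, b n * P n x + b (n + 1) * P (n + 2) x = x * P (n + 1) x) :
    Summable (fun n : ℕ => (P n 0) ^ 2) :=
  stmt_12_general b hb heq hsum P hP1 hPrec
end

section
/- Let P_n be the normalized Hermite polynomials (orthonormal polynomials for a_n = 0, b_n = √((n+1)/2)). Then for every n ≥ 1 the function g_n(x) = ∑_{k=0}^{n} P_k(x)² satisfies g_n'(x) = 4x · (sum of P_j(x)² over j of the opposite parity of n, j < n); consequently g_n is strictly increasing on (0, ∞), strictly decreasing on (-∞, 0), and attains its minimum at x = 0. -/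
/-!
The three-term recurrence and `P (k + 1)' = √(2(k+1)) P k` combine into
`(P (k+1)² + P (k+2)²)' = 4x P (k+1)²`, so peeling off the last two squares of `g n` gives the
derivative formula by two-step induction. For `n ≥ 1` the parity sum contains `P 0² = 1`
(`n` odd) or `P 1² = 2x²` (`n` even), so it is positive for `x ≠ 0` and `g n'` has the sign
of `x`.
-/

open Set

lemma Real.sqrt_two_mul_eq_two_mul_sqrt_half (a : ℝ) :
    Real.sqrt (2 * a) = 2 * Real.sqrt (a / 2) := by
  rw [show 2 * a = 2 ^ 2 * (a / 2) by ring, Real.sqrt_mul (by norm_num),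
    Real.sqrt_sq zero_le_two]

lemma Finset.sum_range_add_two_ite_mod_two_ne {M : Type*} [AddCommMonoid M] (f : ℕ → M)
    (m : ℕ) :
    (∑ j ∈ Finset.range (m + 2), if j % 2 ≠ (m + 2) % 2 then f j else 0)
      = (∑ j ∈ Finset.range m, if j % 2 ≠ m % 2 then f j else 0) + f (m + 1) := by
  have hm : (m + 2) % 2 = m % 2 := by omega
  rw [Finset.sum_range_succ, Finset.sum_range_succ, hm, if_neg (not_not.mpr rfl),
    if_pos (by omega), add_zero]

lemma strictMonoOn_Ici_of_hasDerivAt_pos {f f' : ℝ → ℝ} {a : ℝ}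
    (hf : ∀ x, HasDerivAt f (f' x) x) (hpos : ∀ x, a < x → 0 < f' x) :
    StrictMonoOn f (Ici a) := by
  refine strictMonoOn_of_deriv_pos (convex_Ici a)
    (fun x _ => (hf x).continuousAt.continuousWithinAt) fun x hx => ?_
  rw [interior_Ici] at hx
  exact (hf x).deriv ▸ hpos x hx

lemma strictAntiOn_Iic_of_hasDerivAt_neg {f f' : ℝ → ℝ} {a : ℝ}
    (hf : ∀ x, HasDerivAt f (f' x) x) (hneg : ∀ x, x < a → f' x < 0) :
    StrictAntiOn f (Iic a) := by
  refine strictAntiOn_of_deriv_neg (convex_Iic a)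
    (fun x _ => (hf x).continuousAt.continuousWithinAt) fun x hx => ?_
  rw [interior_Iic] at hx
  exact (hf x).deriv ▸ hneg x hx

section Hermite

variable {P : ℕ → ℝ → ℝ}

lemma hasDerivAt_sq_add_sq_succ
    (hPrec : ∀ k : ℕ, ∀ x, Real.sqrt ((k + 2) / 2) * P (k + 2) x
      = x * P (k + 1) x - Real.sqrt ((k + 1) / 2) * P k x)
    (hPderiv : ∀ k : ℕ, ∀ x, HasDerivAt (P (k + 1)) (Real.sqrt (2 * (k + 1)) * P k x) x)
    (k : ℕ) (x : ℝ) :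
    HasDerivAt (fun y => P (k + 1) y ^ 2 + P (k + 2) y ^ 2) (4 * x * P (k + 1) x ^ 2) x := by
  refine (((hPderiv k x).pow 2).add ((hPderiv (k + 1) x).pow 2)).congr_deriv ?_
  push_cast
  rw [show k + 1 + 1 = k + 2 from rfl, show (k : ℝ) + 1 + 1 = k + 2 by ring,
    Real.sqrt_two_mul_eq_two_mul_sqrt_half, Real.sqrt_two_mul_eq_two_mul_sqrt_half]
  linear_combination 4 * P (k + 1) x * hPrec k x

lemma hasDerivAt_sum_range_sq
    (hP0 : ∀ x, P 0 x = 1) (hP1 : ∀ x, P 1 x = Real.sqrt 2 * x)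
    (hPrec : ∀ k : ℕ, ∀ x, Real.sqrt ((k + 2) / 2) * P (k + 2) x
      = x * P (k + 1) x - Real.sqrt ((k + 1) / 2) * P k x)
    (hPderiv : ∀ k : ℕ, ∀ x, HasDerivAt (P (k + 1)) (Real.sqrt (2 * (k + 1)) * P k x) x)
    (n : ℕ) (x : ℝ) :
    HasDerivAt (fun y => ∑ k ∈ Finset.range (n + 1), P k y ^ 2)
      (4 * x * ∑ j ∈ Finset.range n, if j % 2 ≠ n % 2 then P j x ^ 2 else 0) x := by
  induction n using Nat.twoStepInduction with
  | zero => simpa [hP0] using hasDerivAt_const x (1 : ℝ)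
  | one =>
    have hsq : HasDerivAt (fun y => P 1 y ^ 2) (4 * x) x := by
      refine ((hPderiv 0 x).pow 2).congr_deriv ?_
      simp only [zero_add, Nat.cast_zero, mul_one, hP0, hP1]
      linear_combination 2 * x * Real.mul_self_sqrt zero_le_two
    simpa [Finset.sum_range_succ, hP0] using hsq
  | more m ih _ =>
    have hsplit : (fun y => ∑ k ∈ Finset.range (m + 2 + 1), P k y ^ 2) = fun y =>
        ∑ k ∈ Finset.range (m + 1), P k y ^ 2 + (P (m + 1) y ^ 2 + P (m + 2) y ^ 2) := by
      funext y
      rw [Finset.sum_range_succ, Finset.sum_range_succ, add_assoc]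
    rw [hsplit, Finset.sum_range_add_two_ite_mod_two_ne (fun j => P j x ^ 2), mul_add]
    exact ih.add (hasDerivAt_sq_add_sq_succ hPrec hPderiv m x)

lemma sum_range_ite_mod_two_ne_sq_pos
    (hP0 : ∀ x, P 0 x = 1) (hP1 : ∀ x, P 1 x = Real.sqrt 2 * x)
    {n : ℕ} (hn : 1 ≤ n) {x : ℝ} (hx : x ≠ 0) :
    0 < ∑ j ∈ Finset.range n, if j % 2 ≠ n % 2 then P j x ^ 2 else 0 := by
  refine Finset.sum_pos' (fun j _ => by split_ifs <;> positivity) ?_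
  rcases Nat.mod_two_eq_zero_or_one n with heven | hodd
  · refine ⟨1, Finset.mem_range.mpr (by omega), ?_⟩
    rw [if_pos (by omega), hP1]
    have : Real.sqrt 2 * x ≠ 0 := mul_ne_zero (by positivity) hx
    positivity
  · refine ⟨0, Finset.mem_range.mpr (by omega), ?_⟩
    rw [if_pos (by omega), hP0]
    norm_num

end Hermite

/-- For the normalized Hermite polynomials, `g n = ∑_{k=0}^{n} P k ²` satisfies
`g n ' (x) = 4 x ∑_{j<n, j ≢ n (mod 2)} P j (x) ²`; consequently `g n` is strictly
increasing on `(0,∞)`, strictly decreasing on `(-∞,0)` and attains its minimum at `0`. -/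
theorem stmt_14 (P : ℕ → ℝ → ℝ)
    (hP0 : ∀ x, P 0 x = 1) (hP1 : ∀ x, P 1 x = Real.sqrt 2 * x)
    (hPrec : ∀ k : ℕ, ∀ x, Real.sqrt ((k + 2) / 2) * P (k + 2) x
      = x * P (k + 1) x - Real.sqrt ((k + 1) / 2) * P k x)
    (hPderiv : ∀ k : ℕ, ∀ x, HasDerivAt (P (k + 1)) (Real.sqrt (2 * (k + 1)) * P k x) x) :
    ∀ n : ℕ, 1 ≤ n →
      (∀ x : ℝ, HasDerivAt (fun y => ∑ k ∈ Finset.range (n + 1), P k y ^ 2)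
        (4 * x * ∑ j ∈ Finset.range n, if j % 2 ≠ n % 2 then P j x ^ 2 else 0) x) ∧
      StrictMonoOn (fun x => ∑ k ∈ Finset.range (n + 1), P k x ^ 2) (Set.Ioi (0 : ℝ)) ∧
      StrictAntiOn (fun x => ∑ k ∈ Finset.range (n + 1), P k x ^ 2) (Set.Iio (0 : ℝ)) ∧
      (∀ x : ℝ, ∑ k ∈ Finset.range (n + 1), P k 0 ^ 2
        ≤ ∑ k ∈ Finset.range (n + 1), P k x ^ 2) := by
  intro n hn
  have hderiv := hasDerivAt_sum_range_sq hP0 hP1 hPrec hPderiv n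
  have hpos := fun x (hx : x ≠ 0) => sum_range_ite_mod_two_ne_sq_pos hP0 hP1 hn hx
  have hmono := strictMonoOn_Ici_of_hasDerivAt_pos hderiv
    fun x hx => mul_pos (by linarith) (hpos x hx.ne')
  have hanti := strictAntiOn_Iic_of_hasDerivAt_neg hderiv
    fun x hx => mul_neg_of_neg_of_pos (by linarith) (hpos x hx.ne)
  refine ⟨hderiv, hmono.mono Ioi_subset_Ici_self, hanti.mono Iio_subset_Iic_self, fun x => ?_⟩
  rcases le_or_gt 0 x with hx | hx
  · exact hmono.monotoneOn self_mem_Ici hx hx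
  · exact (hanti hx.le self_mem_Iic hx).le
end

section
/- Under the conditions b_n ≥ b_{n-1} (so b_{n-1}/b_n ≤ 1) and the lower bound ∑_{k=0}^{n} [ (b_k² - b_{k-1}²) P_k(x)² + b_{k-1}(a_k - a_{k-1}) P_{k-1}(x) P_k(x) ] > C b_n for all x ∈ [a,b] and all n ≥ N, the functions f_n(x) = f_{J_n}(x) / (P_n(x)² - (b_{n-1}/b_n) P_{n-1}(x) P_{n+1}(x)) satisfy f_n(x) < 1/(π C) for all x ∈ [a,b] and n ≥ N, where f_{J_n}(x) = √(4b_n² - (a_n - x)²)/(2π b_n²) ≤ 1/(π b_n). -/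
/-!
The Turán-type sum telescopes: by the three-term recurrence, its `n`-th partial sum equals
`b n ^ 2 * P n ^ 2 - b (n - 1) * b n * P (n - 1) * P (n + 1)`, which is `b n ^ 2` times the
denominator of `f n`. The lower bound on the sum thus bounds the denominator below by
`C / b n`, while the semicircle density `f_{J_n}` is at most `1 / (π b n)`; the factors `b n`
cancel.
-/

open Real

theorem semicircleDensity_le (a x : ℝ) {b : ℝ} (hb : 0 < b) :
    √(4 * b ^ 2 - (a - x) ^ 2) / (2 * π * b ^ 2) ≤ 1 / (π * b) := by
  have hsqrt : √(4 * b ^ 2 - (a - x) ^ 2) ≤ 2 * b := by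
    rw [show 2 * b = √((2 * b) ^ 2) by rw [sqrt_sq (by positivity)]]
    exact sqrt_le_sqrt (by nlinarith [sq_nonneg (a - x)])
  calc √(4 * b ^ 2 - (a - x) ^ 2) / (2 * π * b ^ 2)
      ≤ 2 * b / (2 * π * b ^ 2) := by gcongr
    _ = 1 / (π * b) := by field_simp

theorem sum_turan_eq (a b p : ℤ → ℝ) (x : ℝ) (hbneg : b (-1) = 0)
    (hrec : ∀ n : ℕ, b ((n : ℤ) - 1) * p ((n : ℤ) - 1) + a n * p n
      + b n * p ((n : ℤ) + 1) = x * p n) (n : ℕ) :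
    ∑ k ∈ Finset.range (n + 1),
        ((b k ^ 2 - b ((k : ℤ) - 1) ^ 2) * p k ^ 2
          + b ((k : ℤ) - 1) * (a k - a ((k : ℤ) - 1)) * p ((k : ℤ) - 1) * p k)
      = b n ^ 2 * p n ^ 2 - b ((n : ℤ) - 1) * b n * p ((n : ℤ) - 1) * p ((n : ℤ) + 1) := by
  induction n with
  | zero => simp [hbneg]
  | succ n ih =>
    rw [Finset.sum_range_succ, ih]
    have hrec_succ := hrec (n + 1)
    push_cast at hrec_succ ⊢
    simp only [add_sub_cancel_right] at hrec_succ ⊢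
    linear_combination b n * p n * hrec_succ - b n * p ((n : ℤ) + 1) * hrec n

theorem div_lt_one_div_mul_of_le_of_lt {g D b c C : ℝ} (hb : 0 < b) (hc : 0 < c) (hC : 0 < C)
    (hg : g ≤ 1 / (c * b)) (hD : C * b < b ^ 2 * D) : g / D < 1 / (c * C) := by
  have hD' : C / b < D := by rw [div_lt_iff₀ hb]; nlinarith
  have hDpos : 0 < D := (div_pos hC hb).trans hD'
  calc g / D ≤ 1 / (c * b) / D := by gcongr
    _ < 1 / (c * b) / (C / b) := by gcongr
    _ = 1 / (c * C) := by field_simp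

theorem stmt_18_general (α β : ℝ) (a b : ℤ → ℝ) (P : ℤ → ℝ → ℝ)
    (hbneg : b (-1) = 0)
    (hb : ∀ n : ℕ, 0 < b n)
    (hPrec : ∀ n : ℕ, ∀ x, b ((n : ℤ) - 1) * P ((n : ℤ) - 1) x + a n * P n x
      + b n * P ((n : ℤ) + 1) x = x * P n x)
    (C : ℝ) (hC : 0 < C) (N : ℕ)
    (hlow : ∀ x ∈ Set.Icc α β, ∀ n : ℕ, N ≤ n →
      C * b n < ∑ k ∈ Finset.range (n + 1),
        ((b k ^ 2 - b ((k : ℤ) - 1) ^ 2) * P k x ^ 2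
          + b ((k : ℤ) - 1) * (a k - a ((k : ℤ) - 1)) * P ((k : ℤ) - 1) x * P k x))
    (fJ : ℕ → ℝ → ℝ)
    (hfJ : ∀ n : ℕ, ∀ x, fJ n x = Real.sqrt (4 * b n ^ 2 - (a n - x) ^ 2) / (2 * π * b n ^ 2))
    (f : ℕ → ℝ → ℝ)
    (hf : ∀ n : ℕ, ∀ x, f n x = fJ n x /
      (P n x ^ 2 - (b ((n : ℤ) - 1) / b n) * P ((n : ℤ) - 1) x * P ((n : ℤ) + 1) x)) :
    (∀ n : ℕ, ∀ x : ℝ, fJ n x ≤ 1 / (π * b n)) ∧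
      ∀ x ∈ Set.Icc α β, ∀ n : ℕ, N ≤ n → f n x < 1 / (π * C) := by
  have hfJ_le : ∀ n : ℕ, ∀ x : ℝ, fJ n x ≤ 1 / (π * b n) := fun n x => by
    rw [hfJ]
    exact semicircleDensity_le _ _ (hb n)
  refine ⟨hfJ_le, fun x hx n hn => ?_⟩
  have hsum := hlow x hx n hn
  rw [sum_turan_eq a b (P · x) x hbneg (fun m => hPrec m x)] at hsum
  rw [hf]
  refine div_lt_one_div_mul_of_le_of_lt (hb n) pi_pos hC (hfJ_le n x) ?_
  convert hsum using 1
  field_simp [(hb n).ne']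

/-- If `b` is nondecreasing and the Turán-type sum is bounded below by `C * b n` on `[α,β]`
for `n ≥ N`, then the approximating spectral weights
`f n x = f_{J_n}(x) / (P n ² - (b (n-1)/b n) P (n-1) P (n+1))` satisfy `f n x < 1/(π C)`
on `[α,β]` for `n ≥ N`, where `f_{J_n}(x) = √(4 b n ² - (a n - x)²)/(2π b n ²) ≤ 1/(π b n)`. -/
theorem stmt_18 (α β : ℝ) (hαβ : α < β) (a b : ℤ → ℝ) (P : ℤ → ℝ → ℝ)
    (hbneg : b (-1) = 0) (hPneg : ∀ x, P (-1) x = 0)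
    (hb : ∀ n : ℕ, 0 < b n) (hbmono : ∀ n : ℕ, b n ≤ b ((n : ℤ) + 1))
    (hP0 : ∀ x, P 0 x = 1) (hP1 : ∀ x, P 1 x = (x - a 0) / b 0)
    (hPrec : ∀ n : ℕ, ∀ x, b ((n : ℤ) - 1) * P ((n : ℤ) - 1) x + a n * P n x
      + b n * P ((n : ℤ) + 1) x = x * P n x)
    (C : ℝ) (hC : 0 < C) (N : ℕ)
    (hlow : ∀ x ∈ Set.Icc α β, ∀ n : ℕ, N ≤ n →
      C * b n < ∑ k ∈ Finset.range (n + 1),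
        ((b k ^ 2 - b ((k : ℤ) - 1) ^ 2) * P k x ^ 2
          + b ((k : ℤ) - 1) * (a k - a ((k : ℤ) - 1)) * P ((k : ℤ) - 1) x * P k x))
    (fJ : ℕ → ℝ → ℝ)
    (hfJ : ∀ n : ℕ, ∀ x, fJ n x = Real.sqrt (4 * b n ^ 2 - (a n - x) ^ 2) / (2 * π * b n ^ 2))
    (f : ℕ → ℝ → ℝ)
    (hf : ∀ n : ℕ, ∀ x, f n x = fJ n x /
      (P n x ^ 2 - (b ((n : ℤ) - 1) / b n) * P ((n : ℤ) - 1) x * P ((n : ℤ) + 1) x)) :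
    (∀ n : ℕ, ∀ x : ℝ, fJ n x ≤ 1 / (π * b n)) ∧
      ∀ x ∈ Set.Icc α β, ∀ n : ℕ, N ≤ n → f n x < 1 / (π * C) :=
  stmt_18_general α β a b P hbneg hb hPrec C hC N hlow fJ hfJ f hf
end
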